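/- arXiv:2108.08774 — 5 statements merged into one kernel-verified Lean document; each statement's English description precedes it below -/
import Mathlib

section
/- Let X be supported on {x_1,...,x_n} with probabilities p_1 ≥ p_2 ≥ ... ≥ p_n ≥ 0 (Σ p_i = 1), let 1 ≤ k < n, and let α ∈ (0,1)∪(1,∞). Then the minimal expected α-loss for k guesses satisfies ME^{(k)}_α(P_X) = (α/(α-1)) · Σ_{i=s*}^{n} p_i · (1 − ((k−s*+1)·p_i^α / Σ_{j=s*}^{n} p_j^α)^{(α−1)/α}), where s* = min{ r ∈ {1,...,k} : (k−r+1)·p_r^α / Σ_{i=r}^{n} p_i^α ≤ 1 }. -/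
open Finset
open scoped ENNReal

/-- A `k`-guess strategy on `Fin n` is a probability mass function on `k`-tuples. -/
def IsStrategy {n k : ℕ} (Q : (Fin k → Fin n) → ℝ) : Prop :=
  (∀ a, 0 ≤ Q a) ∧ ∑ a, Q a = 1

/-- `succProb Q x` is the probability that at least one of the `k` guesses equals `x`. -/
noncomputable def succProb {n k : ℕ} (Q : (Fin k → Fin n) → ℝ) (x : Fin n) : ℝ :=
  ∑ a ∈ Finset.univ.filter (fun a : Fin k → Fin n => ∃ j, a j = x), Q a

/-- The `α`-loss `ℓ_α(p) = (α/(α-1))(1 - p^{(α-1)/α})`, valued in `ℝ≥0∞`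
(it is `+∞` at `p = 0` when `α < 1`). -/
noncomputable def alphaLoss (α p : ℝ) : ℝ≥0∞ :=
  if p = 0 ∧ α < 1 then ⊤
  else ENNReal.ofReal ((α / (α - 1)) * (1 - p ^ ((α - 1) / α)))

/-- Reverse two-point AM-GM for a negative weight. -/
lemma rev_geom_mean {a b lam : ℝ} (ha : 0 < a) (hb : 0 < b) (hl : lam < 0) :
    lam * a + (1 - lam) * b ≤ a ^ lam * b ^ (1 - lam) := by
  have h1 : (0:ℝ) < 1 - lam := by linarith
  set θ : ℝ := -lam / (1 - lam) with hθdef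
  have hθ0 : 0 ≤ θ := by
    apply div_nonneg (by linarith) h1.le
  have hθ1 : 0 ≤ 1 - θ := by
    have : θ ≤ 1 := by
      rw [hθdef, div_le_one h1]; linarith
    linarith
  set X : ℝ := a ^ lam * b ^ (1 - lam) with hXdef
  have hX : 0 < X := by positivity
  have h1θ : 1 - θ = 1 / (1 - lam) := by
    rw [hθdef]; field_simp; ring
  have key : a ^ θ * X ^ (1 - θ) = b := by
    rw [hXdef, Real.mul_rpow (le_of_lt (Real.rpow_pos_of_pos ha _))
      (le_of_lt (Real.rpow_pos_of_pos hb _)), ← Real.rpow_mul ha.le,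
      ← Real.rpow_mul hb.le, ← mul_assoc, ← Real.rpow_add ha, h1θ]
    have e1 : θ + lam * (1 / (1 - lam)) = 0 := by rw [hθdef]; field_simp; ring
    have e2 : (1 - lam) * (1 / (1 - lam)) = 1 := by field_simp
    rw [e1, e2, Real.rpow_zero, Real.rpow_one, one_mul]
  have amgm := Real.geom_mean_le_arith_mean2_weighted hθ0 hθ1 ha.le hX.le (by ring)
  rw [key] at amgm
  have h2 : (1 - lam) * b ≤ (1 - lam) * (θ * a + (1 - θ) * X) :=
    mul_le_mul_of_nonneg_left amgm h1.le
  have h3 : (1 - lam) * θ = -lam := by rw [hθdef]; field_simp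
  have h4 : (1 - lam) * (1 - θ) = 1 := by rw [h1θ]; field_simp
  nlinarith [h2, h3, h4]

/-- Tangent-line inequality for the convex function `t ↦ c (1 - t^β)`. -/
lemma tangent_ineq {α : ℝ} (hα : 0 < α) (hα1 : α ≠ 1) {u t : ℝ} (hu : 0 < u) (ht : 0 ≤ t)
    (ht' : α < 1 → 0 < t) :
    (α/(α-1)) * (1 - u ^ ((α-1)/α)) - u ^ ((α-1)/α - 1) * (t - u)
      ≤ (α/(α-1)) * (1 - t ^ ((α-1)/α)) := by
  set β : ℝ := (α-1)/α with hβdef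
  set c : ℝ := α/(α-1) with hcdef
  have hα0 : α ≠ 0 := ne_of_gt hα
  have hα1' : α - 1 ≠ 0 := sub_ne_zero.mpr hα1
  have hcβ : c * β = 1 := by rw [hcdef, hβdef]; field_simp
  have huβ1 : u ^ (1-β) * u ^ (β-1) = 1 := by
    rw [← Real.rpow_add hu, show (1-β)+(β-1) = 0 by ring, Real.rpow_zero]
  have huu : u ^ (β-1) * u = u ^ β := by
    nth_rewrite 2 [← Real.rpow_one u]
    rw [← Real.rpow_add hu, sub_add_cancel]
  rcases lt_or_gt_of_ne hα1 with h1 | h1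
  · -- α < 1 : β < 0, c < 0
    have htpos : 0 < t := ht' h1
    have hβ0 : β < 0 := div_neg_of_neg_of_pos (by linarith) hα
    have hc0 : c < 0 := div_neg_of_pos_of_neg hα (by linarith)
    have amgm := rev_geom_mean htpos hu hβ0
    have hγ : c * u ^ (β-1) < 0 :=
      mul_neg_of_neg_of_pos hc0 (Real.rpow_pos_of_pos hu _)
    have h2 := mul_le_mul_of_nonpos_left amgm hγ.le
    have hA : c * u ^ (β-1) * (t ^ β * u ^ (1-β)) = c * t ^ β := by
      calc c * u ^ (β-1) * (t ^ β * u ^ (1-β))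
          = c * t ^ β * (u ^ (1-β) * u ^ (β-1)) := by ring
        _ = c * t ^ β := by rw [huβ1, mul_one]
    have hB : c * u ^ (β-1) * (β*t + (1-β)*u)
        = (c*β) * (t * u ^ (β-1)) + c*(1-β) * (u ^ (β-1) * u) := by ring
    have hc1 : c * (1-β) = c - 1 := by rw [mul_sub, mul_one, hcβ]
    rw [hA, hB, hcβ, huu, hc1] at h2
    nlinarith [h2, huu]
  · -- 1 < α : 0 < β < 1, c > 0
    have hβ0 : 0 ≤ β := by
      apply div_nonneg (by linarith) hα.le
    have hβ1 : 0 ≤ 1 - β := by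
      have : β ≤ 1 := by rw [hβdef, div_le_one hα]; linarith
      linarith
    have hc0 : 0 < c := div_pos hα (by linarith)
    have amgm := Real.geom_mean_le_arith_mean2_weighted hβ0 hβ1 ht hu.le (by ring)
    have hγ : 0 < c * u ^ (β-1) := mul_pos hc0 (Real.rpow_pos_of_pos hu _)
    have h2 := mul_le_mul_of_nonneg_left amgm hγ.le
    have hA : c * u ^ (β-1) * (t ^ β * u ^ (1-β)) = c * t ^ β := by
      calc c * u ^ (β-1) * (t ^ β * u ^ (1-β))
          = c * t ^ β * (u ^ (1-β) * u ^ (β-1)) := by ring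
        _ = c * t ^ β := by rw [huβ1, mul_one]
    have hB : c * u ^ (β-1) * (β*t + (1-β)*u)
        = (c*β) * (t * u ^ (β-1)) + c*(1-β) * (u ^ (β-1) * u) := by ring
    have hc1 : c * (1-β) = c - 1 := by rw [mul_sub, mul_one, hcβ]
    rw [hA, hB, hcβ, huu, hc1] at h2
    nlinarith [h2, huu]

lemma loss_nonneg {α u : ℝ} (hα : 0 < α) (hα1 : α ≠ 1) (hu : 0 < u) (hu1 : u ≤ 1) :
    0 ≤ (α/(α-1)) * (1 - u ^ ((α-1)/α)) := by
  rcases lt_or_gt_of_ne hα1 with h1 | h1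
  · have hc : α/(α-1) ≤ 0 := le_of_lt (div_neg_of_pos_of_neg hα (by linarith))
    have hβ : (α-1)/α ≤ 0 := le_of_lt (div_neg_of_neg_of_pos (by linarith) hα)
    have : 1 ≤ u ^ ((α-1)/α) := Real.one_le_rpow_of_pos_of_le_one_of_nonpos hu hu1 hβ
    nlinarith [hc, (by linarith : 1 - u ^ ((α-1)/α) ≤ (0:ℝ))]

  · have hc : 0 ≤ α/(α-1) := le_of_lt (div_pos hα (by linarith))
    have : u ^ ((α-1)/α) ≤ 1 :=
      Real.rpow_le_one hu.le hu1 (div_nonneg (by linarith) hα.le)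
    exact mul_nonneg hc (by linarith)

lemma term_eq {α p g : ℝ} (hp : 0 ≤ p) (h2 : g = 0 → α < 1 → p = 0) :
    ENNReal.ofReal p * alphaLoss α g
      = ENNReal.ofReal (p * ((α/(α-1)) * (1 - g ^ ((α-1)/α)))) := by
  unfold alphaLoss
  by_cases hg : g = 0 ∧ α < 1
  · have hp0 : p = 0 := h2 hg.1 hg.2
    simp [hg, hp0]
  · rw [if_neg hg, ← ENNReal.ofReal_mul hp]

lemma term_le {α p g : ℝ} (hp : 0 ≤ p) :
    ENNReal.ofReal (p * ((α/(α-1)) * (1 - g ^ ((α-1)/α))))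
      ≤ ENNReal.ofReal p * alphaLoss α g := by
  by_cases hg : g = 0 ∧ α < 1
  · by_cases hp0 : p = 0
    · simp [hp0]
    · unfold alphaLoss
      rw [if_pos hg]
      have : ENNReal.ofReal p ≠ 0 := by
        simp only [ne_eq, ENNReal.ofReal_eq_zero, not_le]
        exact lt_of_le_of_ne hp (Ne.symm hp0)
      rw [ENNReal.mul_top this]
      exact le_top
  · rw [term_eq hp (fun h1 h2 => absurd ⟨h1, h2⟩ hg)]


/-- Any `[0,1]`-valued vector on `T` with integer sum `M` is a mixture of
indicators of `M`-element subsets of `T`. -/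
lemma decomp {n : ℕ} (N : ℕ) : ∀ (T : Finset (Fin n)) (v : Fin n → ℝ) (M : ℕ),
    (T.filter (fun i => 0 < v i ∧ v i < 1)).card ≤ N →
    (∀ i ∈ T, 0 ≤ v i) → (∀ i ∈ T, v i ≤ 1) → (∑ i ∈ T, v i) = (M : ℝ) →
    ∃ w : Finset (Fin n) → ℝ, (∀ S, 0 ≤ w S) ∧ (∀ S, w S ≠ 0 → S ⊆ T ∧ S.card = M) ∧
      (∑ S, w S) = 1 ∧
      ∀ i ∈ T, (∑ S ∈ Finset.univ.filter (fun S : Finset (Fin n) => i ∈ S), w S) = v i := by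
  induction N with
  | zero =>
    intro T v M hcard h0 h1 hsum
    -- every value is 0 or 1
    have hv01 : ∀ i ∈ T, v i = 0 ∨ v i = 1 := by
      intro i hi
      have : i ∉ T.filter (fun i => 0 < v i ∧ v i < 1) := by
        rw [Finset.card_eq_zero.mp (Nat.le_zero.mp hcard)]; exact Finset.notMem_empty i
      rw [Finset.mem_filter] at this
      push_neg at this
      rcases lt_or_eq_of_le (h0 i hi) with h | h
      · right; exact le_antisymm (h1 i hi) (this hi h)
      · left; exact h.symm
    set S₀ := T.filter (fun i => v i = 1) with hS₀
    have hsum2 : ∑ i ∈ T, v i = (S₀.card : ℝ) := by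
      rw [← Finset.sum_filter_add_sum_filter_not T (fun i => v i = 1) v]
      have e1 : ∑ i ∈ T.filter (fun i => v i = 1), v i = (S₀.card : ℝ) := by
        rw [hS₀, Finset.card_eq_sum_ones, Nat.cast_sum]
        exact Finset.sum_congr rfl (fun i hi => by
          rw [(Finset.mem_filter.mp hi).2]; simp)
      have e2 : ∑ i ∈ T.filter (fun i => ¬ v i = 1), v i = 0 := by
        apply Finset.sum_eq_zero
        intro i hi
        rw [Finset.mem_filter] at hi
        rcases hv01 i hi.1 with h | h
        · exact h
        · exact absurd h hi.2
      rw [e1, e2, add_zero]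
    have hMcard : S₀.card = M := by
      have : (S₀.card : ℝ) = (M : ℝ) := by rw [← hsum2, hsum]
      exact_mod_cast this
    refine ⟨fun S => if S = S₀ then 1 else 0, ?_, ?_, ?_, ?_⟩
    · intro S; positivity
    · intro S hS
      have : S = S₀ := by by_contra h; simp [h] at hS
      subst this
      exact ⟨Finset.filter_subset _ _, hMcard⟩
    · simp
    · intro i hi
      rw [Finset.sum_ite_eq' (Finset.univ.filter (fun S : Finset (Fin n) => i ∈ S)) S₀
        (fun _ => (1:ℝ))]
      rcases hv01 i hi with h | h
      · rw [if_neg, h]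
        simp only [Finset.mem_filter, Finset.mem_univ, true_and]
        rw [hS₀, Finset.mem_filter]
        rintro ⟨-, h1⟩; rw [h1] at h; norm_num at h
      · rw [if_pos, h]
        simp only [Finset.mem_filter, Finset.mem_univ, true_and]
        rw [hS₀, Finset.mem_filter]
        exact ⟨hi, h⟩
  | succ N ih =>
    intro T v M hcard h0 h1 hsum
    by_cases hle : (T.filter (fun i => 0 < v i ∧ v i < 1)).card ≤ N
    · exact ih T v M hle h0 h1 hsum
    push_neg at hle
    -- the fractional set is nonempty; pick i in it
    set F := T.filter (fun i => 0 < v i ∧ v i < 1) with hF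
    have hFne : F.Nonempty := Finset.card_pos.mp (by omega)
    obtain ⟨i, hiF⟩ := hFne
    have hiT : i ∈ T := (Finset.mem_filter.mp hiF).1
    have hifrac : 0 < v i ∧ v i < 1 := (Finset.mem_filter.mp hiF).2
    -- there must be a second fractional index
    have hj : ∃ j ∈ F, j ≠ i := by
      by_contra hcon
      push_neg at hcon
      -- all other elements of T are 0/1-valued
      have hv01 : ∀ x ∈ T.erase i, v x = 0 ∨ v x = 1 := by
        intro x hx
        have hxT := Finset.mem_of_mem_erase hx
        have hxi := Finset.ne_of_mem_erase hx
        by_contra h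
        push_neg at h
        have : x ∈ F := Finset.mem_filter.mpr ⟨hxT,
          ⟨lt_of_le_of_ne (h0 x hxT) (Ne.symm h.1), lt_of_le_of_ne (h1 x hxT) h.2⟩⟩
        exact hxi (hcon x this)
      set S₁ := (T.erase i).filter (fun x => v x = 1) with hS₁
      have hsum2 : ∑ x ∈ T.erase i, v x = (S₁.card : ℝ) := by
        rw [← Finset.sum_filter_add_sum_filter_not (T.erase i) (fun x => v x = 1) v]
        have e1 : ∑ x ∈ (T.erase i).filter (fun x => v x = 1), v x = (S₁.card : ℝ) := by
          rw [hS₁, Finset.card_eq_sum_ones, Nat.cast_sum]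
          exact Finset.sum_congr rfl (fun x hx => by
            rw [(Finset.mem_filter.mp hx).2]; simp)
        have e2 : ∑ x ∈ (T.erase i).filter (fun x => ¬ v x = 1), v x = 0 := by
          apply Finset.sum_eq_zero
          intro x hx
          rw [Finset.mem_filter] at hx
          rcases hv01 x hx.1 with h | h
          · exact h
          · exact absurd h hx.2
        rw [e1, e2, add_zero]
      have hsplit : v i + ∑ x ∈ T.erase i, v x = (M : ℝ) := by
        rw [Finset.add_sum_erase T v hiT, hsum]
      rw [hsum2] at hsplit
      have hlt1 : (S₁.card : ℝ) < (M:ℝ) := by linarith [hifrac.1]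
      have hlt2 : (M : ℝ) < (S₁.card : ℝ) + 1 := by linarith [hifrac.2]
      have l1 : S₁.card < M := by exact_mod_cast hlt1
      have l2 : M < S₁.card + 1 := by exact_mod_cast hlt2
      omega
    obtain ⟨j, hjF, hji⟩ := hj
    have hjT : j ∈ T := (Finset.mem_filter.mp hjF).1
    have hjfrac : 0 < v j ∧ v j < 1 := (Finset.mem_filter.mp hjF).2
    set ε₁ := min (1 - v i) (v j) with hε₁
    set ε₂ := min (v i) (1 - v j) with hε₂
    have hε₁pos : 0 < ε₁ := lt_min (by linarith [hifrac.2]) hjfrac.1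
    have hε₂pos : 0 < ε₂ := lt_min hifrac.1 (by linarith [hjfrac.2])
    set v' := fun x => if x = i then v i + ε₁ else if x = j then v j - ε₁ else v x with hv'
    set v'' := fun x => if x = i then v i - ε₂ else if x = j then v j + ε₂ else v x with hv''
    have hε₁a : ε₁ ≤ 1 - v i := min_le_left _ _
    have hε₁b : ε₁ ≤ v j := min_le_right _ _
    have hε₂a : ε₂ ≤ v i := min_le_left _ _
    have hε₂b : ε₂ ≤ 1 - v j := min_le_right _ _
    have hv'i : v' i = v i + ε₁ := by simp [hv']
    have hv'j : v' j = v j - ε₁ := by simp [hv', hji]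
    have hv'x : ∀ x, x ≠ i → x ≠ j → v' x = v x := by
      intro x hxi hxj; simp [hv', hxi, hxj]
    have hv''i : v'' i = v i - ε₂ := by simp [hv'']
    have hv''j : v'' j = v j + ε₂ := by simp [hv'', hji]
    have hv''x : ∀ x, x ≠ i → x ≠ j → v'' x = v x := by
      intro x hxi hxj; simp [hv'', hxi, hxj]
    have hjTi : j ∈ T.erase i := Finset.mem_erase.mpr ⟨hji, hjT⟩
    -- sums agree
    have key : ∀ f g : Fin n → ℝ, (f i - g i) + (f j - g j) = 0 →
        (∀ x, x ≠ i → x ≠ j → f x = g x) → ∑ x ∈ T, f x = ∑ x ∈ T, g x := by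
      intro f g hfg hrest
      rw [← Finset.add_sum_erase T f hiT, ← Finset.add_sum_erase _ f hjTi,
        ← Finset.add_sum_erase T g hiT, ← Finset.add_sum_erase _ g hjTi]
      have : ∑ x ∈ (T.erase i).erase j, f x = ∑ x ∈ (T.erase i).erase j, g x := by
        apply Finset.sum_congr rfl
        intro x hx
        exact hrest x (Finset.ne_of_mem_erase (Finset.mem_of_mem_erase hx))
          (Finset.ne_of_mem_erase hx)
      linarith
    have hsum' : ∑ x ∈ T, v' x = (M : ℝ) := by
      rw [key v' v (by rw [hv'i, hv'j]; ring) hv'x]; exact hsum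
    have hsum'' : ∑ x ∈ T, v'' x = (M : ℝ) := by
      rw [key v'' v (by rw [hv''i, hv''j]; ring) hv''x]; exact hsum
    -- bounds
    have h0' : ∀ x ∈ T, 0 ≤ v' x := by
      intro x hx
      by_cases hxi : x = i
      · rw [hxi, hv'i]; linarith [hifrac.1]
      by_cases hxj : x = j
      · rw [hxj, hv'j]; linarith
      · rw [hv'x x hxi hxj]; exact h0 x hx
    have h1' : ∀ x ∈ T, v' x ≤ 1 := by
      intro x hx
      by_cases hxi : x = i
      · rw [hxi, hv'i]; linarith
      by_cases hxj : x = j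
      · rw [hxj, hv'j]; linarith [h1 j hjT]
      · rw [hv'x x hxi hxj]; exact h1 x hx
    have h0'' : ∀ x ∈ T, 0 ≤ v'' x := by
      intro x hx
      by_cases hxi : x = i
      · rw [hxi, hv''i]; linarith
      by_cases hxj : x = j
      · rw [hxj, hv''j]; linarith [hjfrac.1]
      · rw [hv''x x hxi hxj]; exact h0 x hx
    have h1'' : ∀ x ∈ T, v'' x ≤ 1 := by
      intro x hx
      by_cases hxi : x = i
      · rw [hxi, hv''i]; linarith [h1 i hiT]
      by_cases hxj : x = j
      · rw [hxj, hv''j]; linarith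
      · rw [hv''x x hxi hxj]; exact h1 x hx
    -- fractional counts decrease
    have hFcard : F.card = N + 1 := le_antisymm hcard hle
    have hsubgen : ∀ u : Fin n → ℝ, (∀ x, x ≠ i → x ≠ j → u x = v x) →
        T.filter (fun x => 0 < u x ∧ u x < 1) ⊆ F := by
      intro u hu x hx
      rw [Finset.mem_filter] at hx
      rcases eq_or_ne x i with rfl | hxi
      · exact hiF
      rcases eq_or_ne x j with rfl | hxj
      · exact hjF
      · rw [hF, Finset.mem_filter]
        exact ⟨hx.1, by rw [← hu x hxi hxj]; exact hx.2⟩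
    have hcard' : (T.filter (fun x => 0 < v' x ∧ v' x < 1)).card ≤ N := by
      rcases min_cases (1 - v i) (v j) with ⟨he, -⟩ | ⟨he, -⟩
      · -- v' i = 1
        have hnot : i ∉ T.filter (fun x => 0 < v' x ∧ v' x < 1) := by
          rw [Finset.mem_filter]
          rintro ⟨-, -, hlt⟩
          have he' : ε₁ = 1 - v i := by rw [hε₁]; exact he
          rw [hv'i] at hlt; linarith
        have hsub : T.filter (fun x => 0 < v' x ∧ v' x < 1) ⊆ F.erase i := by
          intro x hx
          exact Finset.mem_erase.mpr ⟨fun h => hnot (h ▸ hx), hsubgen v' hv'x hx⟩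
        calc (T.filter (fun x => 0 < v' x ∧ v' x < 1)).card ≤ (F.erase i).card :=
              Finset.card_le_card hsub
          _ = F.card - 1 := Finset.card_erase_of_mem hiF
          _ ≤ N := by omega
      · -- v' j = 0
        have hnot : j ∉ T.filter (fun x => 0 < v' x ∧ v' x < 1) := by
          rw [Finset.mem_filter]
          rintro ⟨-, hgt, -⟩
          have he' : ε₁ = v j := by rw [hε₁]; exact he
          rw [hv'j] at hgt; linarith
        have hsub : T.filter (fun x => 0 < v' x ∧ v' x < 1) ⊆ F.erase j := by
          intro x hx
          exact Finset.mem_erase.mpr ⟨fun h => hnot (h ▸ hx), hsubgen v' hv'x hx⟩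
        calc (T.filter (fun x => 0 < v' x ∧ v' x < 1)).card ≤ (F.erase j).card :=
              Finset.card_le_card hsub
          _ = F.card - 1 := Finset.card_erase_of_mem hjF
          _ ≤ N := by omega
    have hcard'' : (T.filter (fun x => 0 < v'' x ∧ v'' x < 1)).card ≤ N := by
      rcases min_cases (v i) (1 - v j) with ⟨he, -⟩ | ⟨he, -⟩
      · -- v'' i = 0
        have hnot : i ∉ T.filter (fun x => 0 < v'' x ∧ v'' x < 1) := by
          rw [Finset.mem_filter]
          rintro ⟨-, hgt, -⟩
          have he' : ε₂ = v i := by rw [hε₂]; exact he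
          rw [hv''i] at hgt; linarith
        have hsub : T.filter (fun x => 0 < v'' x ∧ v'' x < 1) ⊆ F.erase i := by
          intro x hx
          exact Finset.mem_erase.mpr ⟨fun h => hnot (h ▸ hx), hsubgen v'' hv''x hx⟩
        calc (T.filter (fun x => 0 < v'' x ∧ v'' x < 1)).card ≤ (F.erase i).card :=
              Finset.card_le_card hsub
          _ = F.card - 1 := Finset.card_erase_of_mem hiF
          _ ≤ N := by omega
      · -- v'' j = 1
        have hnot : j ∉ T.filter (fun x => 0 < v'' x ∧ v'' x < 1) := by
          rw [Finset.mem_filter]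
          rintro ⟨-, -, hlt⟩
          have he' : ε₂ = 1 - v j := by rw [hε₂]; exact he
          rw [hv''j] at hlt; linarith
        have hsub : T.filter (fun x => 0 < v'' x ∧ v'' x < 1) ⊆ F.erase j := by
          intro x hx
          exact Finset.mem_erase.mpr ⟨fun h => hnot (h ▸ hx), hsubgen v'' hv''x hx⟩
        calc (T.filter (fun x => 0 < v'' x ∧ v'' x < 1)).card ≤ (F.erase j).card :=
              Finset.card_le_card hsub
          _ = F.card - 1 := Finset.card_erase_of_mem hjF
          _ ≤ N := by omega
    obtain ⟨w₁, hw₁0, hw₁s, hw₁1, hw₁m⟩ := ih T v' M hcard' h0' h1' hsum'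
    obtain ⟨w₂, hw₂0, hw₂s, hw₂1, hw₂m⟩ := ih T v'' M hcard'' h0'' h1'' hsum''
    set θ : ℝ := ε₂ / (ε₁ + ε₂) with hθ
    have hden : 0 < ε₁ + ε₂ := by linarith
    have hθ0 : 0 ≤ θ := div_nonneg hε₂pos.le hden.le
    have hθ1 : θ ≤ 1 := by rw [hθ, div_le_one hden]; linarith
    refine ⟨fun S => θ * w₁ S + (1-θ) * w₂ S, ?_, ?_, ?_, ?_⟩
    · intro S
      exact add_nonneg (mul_nonneg hθ0 (hw₁0 S)) (mul_nonneg (by linarith) (hw₂0 S))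
    · intro S hS
      by_cases h1' : w₁ S ≠ 0
      · exact hw₁s S h1'
      by_cases h2' : w₂ S ≠ 0
      · exact hw₂s S h2'
      push_neg at h1' h2'
      exact absurd (show θ * w₁ S + (1-θ) * w₂ S = 0 by rw [h1', h2']; ring) hS
    · rw [show (∑ S : Finset (Fin n), (θ * w₁ S + (1-θ) * w₂ S))
          = θ * (∑ S : Finset (Fin n), w₁ S) + (1-θ) * (∑ S : Finset (Fin n), w₂ S) by
        rw [Finset.mul_sum, Finset.mul_sum, ← Finset.sum_add_distrib], hw₁1, hw₂1]
      ring
    · intro x hx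
      rw [show (∑ S ∈ Finset.univ.filter (fun S : Finset (Fin n) => x ∈ S),
            (θ * w₁ S + (1-θ) * w₂ S))
          = θ * (∑ S ∈ Finset.univ.filter (fun S : Finset (Fin n) => x ∈ S), w₁ S)
            + (1-θ) * (∑ S ∈ Finset.univ.filter (fun S : Finset (Fin n) => x ∈ S), w₂ S) by
        rw [Finset.mul_sum, Finset.mul_sum, ← Finset.sum_add_distrib],
        hw₁m x hx, hw₂m x hx]
      have hbal : θ * ε₁ - (1-θ) * ε₂ = 0 := by
        rw [hθ]; field_simp; ring
      by_cases hxi : x = i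
      · rw [hxi, hv'i, hv''i]; linear_combination hbal
      by_cases hxj : x = j
      · rw [hxj, hv'j, hv''j]; linear_combination -hbal
      · rw [hv'x x hxi hxj, hv''x x hxi hxj]; ring

lemma exists_strategy {n k : ℕ} (hk1 : 1 ≤ k) (hkn : k < n) (s : ℕ) (hs1 : 1 ≤ s)
    (hsk : s ≤ k) (v : Fin n → ℝ)
    (h0 : ∀ i, 0 ≤ v i) (h1 : ∀ i, v i ≤ 1)
    (hsum : ∑ i ∈ Finset.univ.filter (fun i : Fin n => s - 1 ≤ (i:ℕ)), v i
      = ((k + 1 - s : ℕ) : ℝ)) :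
    ∃ Q : (Fin k → Fin n) → ℝ, IsStrategy Q ∧
      (∀ x : Fin n, (x:ℕ) < s - 1 → succProb Q x = 1) ∧
      (∀ x : Fin n, s - 1 ≤ (x:ℕ) → succProb Q x = v x) := by
  classical
  set T : Finset (Fin n) := Finset.univ.filter (fun i : Fin n => s - 1 ≤ (i:ℕ)) with hT
  set M : ℕ := k + 1 - s with hM
  obtain ⟨w, hw0, hwsupp, hw1, hwm⟩ := decomp T.card T v M
    (Finset.card_le_card (Finset.filter_subset _ _))
    (fun i _ => h0 i) (fun i _ => h1 i) hsum
  set enc : Finset (Fin n) → (Fin k → Fin n) := fun S j =>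
    if h : (j : ℕ) < s - 1 then ⟨(j:ℕ), by have := j.isLt; omega⟩
    else if h2 : S.card = M then
      ((S.orderIsoOfFin h2) ⟨(j:ℕ) - (s-1), by have := j.isLt; omega⟩ : Fin n)
    else ⟨0, by omega⟩ with henc
  have hcover : ∀ S : Finset (Fin n), S ⊆ T → S.card = M →
      ∀ x : Fin n, ((∃ j, enc S j = x) ↔ ((x:ℕ) < s - 1 ∨ x ∈ S)) := by
    intro S hST hSc x
    constructor
    · rintro ⟨j, rfl⟩
      by_cases h : (j : ℕ) < s - 1
      · left; simp only [henc, dif_pos h]; exact h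
      · right; simp only [henc, dif_neg h, dif_pos hSc]
        exact ((S.orderIsoOfFin hSc) _).2
    · rintro (hx | hx)
      · refine ⟨⟨(x:ℕ), by have := x.isLt; omega⟩, ?_⟩
        simp only [henc, dif_pos hx]
      · set i := (S.orderIsoOfFin hSc).symm ⟨x, hx⟩ with hi
        have hiM : (i : ℕ) < M := i.isLt
        refine ⟨⟨(i:ℕ) + (s-1), by omega⟩, ?_⟩
        have hnot : ¬ ((⟨(i:ℕ) + (s-1), by omega⟩ : Fin k) : ℕ) < s - 1 := by
          simp <;> omega
        simp only [henc, dif_neg hnot, dif_pos hSc]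
        have : (⟨((⟨(i:ℕ) + (s-1), by omega⟩ : Fin k) : ℕ) - (s-1), by
            have : (i:ℕ) + (s-1) < k := by omega
            simp <;> omega⟩ : Fin M) = i := by
          apply Fin.ext; simp
        rw [this, hi]
        simp
  set Q : (Fin k → Fin n) → ℝ :=
    fun a => ∑ S : Finset (Fin n), if enc S = a then w S else 0 with hQ
  have hsucc : ∀ x : Fin n,
      succProb Q x = ∑ S : Finset (Fin n), if (∃ j, enc S j = x) then w S else 0 := by
    intro x
    unfold succProb
    rw [hQ, Finset.sum_comm]
    apply Finset.sum_congr rfl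
    intro S _
    rw [Finset.sum_ite_eq (Finset.univ.filter (fun a : Fin k → Fin n => ∃ j, a j = x))
      (enc S) (fun _ => w S)]
    simp only [Finset.mem_filter, Finset.mem_univ, true_and]
  refine ⟨Q, ⟨?_, ?_⟩, ?_, ?_⟩
  · intro a
    apply Finset.sum_nonneg
    intro S _
    split
    · exact hw0 S
    · exact le_refl 0
  · rw [hQ]
    rw [Finset.sum_comm, ← hw1]
    apply Finset.sum_congr rfl
    intro S _
    rw [Finset.sum_ite_eq Finset.univ (enc S) (fun _ => w S)]
    simp
  · intro x hx
    rw [hsucc x, ← hw1]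
    apply Finset.sum_congr rfl
    intro S _
    by_cases hws : w S = 0
    · split <;> simp [hws]
    · obtain ⟨hST, hSc⟩ := hwsupp S hws
      rw [if_pos ((hcover S hST hSc x).mpr (Or.inl hx))]
  · intro x hx
    have hxT : x ∈ T := by rw [hT, Finset.mem_filter]; exact ⟨Finset.mem_univ x, hx⟩
    rw [hsucc x, ← hwm x hxT, Finset.sum_filter]
    apply Finset.sum_congr rfl
    intro S _
    by_cases hws : w S = 0
    · split <;> split <;> simp [hws]
    · obtain ⟨hST, hSc⟩ := hwsupp S hws
      have : (∃ j, enc S j = x) ↔ x ∈ S := by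
        rw [hcover S hST hSc x]
        constructor
        · rintro (h | h)
          · omega
          · exact h
        · exact Or.inr
      by_cases hxS : x ∈ S
      · rw [if_pos (this.mpr hxS), if_pos hxS]
      · rw [if_neg (fun h => hxS (this.mp h)), if_neg hxS]

set_option maxHeartbeats 1600000 in
/-- **Theorem 1** (Minimal expected `α`-loss for `k` guesses).  The indices below are
1-based: `p ⟨r-1, _⟩` is `p_r` of the paper, and the filter `s - 1 ≤ i` ranges over the
1-based indices `i ≥ s*`. -/
theorem minimal_expected_alpha_loss_k_guesses
    {n k : ℕ} (hk1 : 1 ≤ k) (hkn : k < n)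
    (α : ℝ) (hα : 0 < α) (hα1 : α ≠ 1)
    (p : Fin n → ℝ) (hp0 : ∀ i, 0 ≤ p i) (hp1 : ∑ i, p i = 1)
    (hsorted : ∀ i j : Fin n, i ≤ j → p j ≤ p i)
    (s : ℕ)
    (hs : IsLeast {r : ℕ | ∃ h : 1 ≤ r ∧ r ≤ k,
        ((k : ℝ) - r + 1) * p ⟨r - 1, by omega⟩ ^ α /
          (∑ i ∈ Finset.univ.filter (fun i : Fin n => r - 1 ≤ (i : ℕ)), p i ^ α) ≤ 1} s) :
    IsLeast {E : ℝ≥0∞ | ∃ Q : (Fin k → Fin n) → ℝ, IsStrategy Q ∧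
        E = ∑ i, ENNReal.ofReal (p i) * alphaLoss α (succProb Q i)}
      (ENNReal.ofReal ((α / (α - 1)) *
        ∑ i ∈ Finset.univ.filter (fun i : Fin n => s - 1 ≤ (i : ℕ)),
          p i * (1 - (((k : ℝ) - s + 1) * p i ^ α /
            (∑ j ∈ Finset.univ.filter (fun j : Fin n => s - 1 ≤ (j : ℕ)), p j ^ α))
              ^ ((α - 1) / α)))) := by
  classical
  obtain ⟨hmem, hmin⟩ := hs
  obtain ⟨⟨hs1, hsk⟩, hconds⟩ := hmem
  have hα0 : α ≠ 0 := ne_of_gt hα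
  have hα1' : α - 1 ≠ 0 := sub_ne_zero.mpr hα1
  set c : ℝ := α / (α - 1) with hc
  set β : ℝ := (α - 1) / α with hβ
  set Tail : Finset (Fin n) := Finset.univ.filter (fun i : Fin n => s - 1 ≤ (i:ℕ)) with hTail
  set D : ℝ := ∑ i ∈ Tail, p i ^ α with hD
  set mR : ℝ := (k:ℝ) - s + 1 with hmR
  have hsrk : (s:ℝ) ≤ (k:ℝ) := Nat.cast_le.mpr hsk
  have hmRpos : 0 < mR := by rw [hmR]; linarith
  have hD0 : 0 ≤ D := Finset.sum_nonneg fun i _ => Real.rpow_nonneg (hp0 i) α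
  have hloss1 : alphaLoss α 1 = 0 := by
    unfold alphaLoss
    rw [if_neg (by norm_num), Real.one_rpow]
    simp
  have hsn : s - 1 < n := by omega
  set e : Fin n := ⟨s - 1, hsn⟩ with he
  rcases eq_or_lt_of_le hD0 with hDeq | hDpos
  · -- D = 0 : all tail masses vanish, optimum is 0
    have hTail0 : ∀ i ∈ Tail, p i = 0 := by
      intro i hi
      have h := (Finset.sum_eq_zero_iff_of_nonneg
        (fun i _ => Real.rpow_nonneg (hp0 i) α)).mp hDeq.symm i hi
      have := Real.rpow_natCast
      exact (Real.rpow_eq_zero (hp0 i) hα0).mp h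
    have hV0 : (∑ i ∈ Tail, p i * (1 - (mR * p i ^ α / D) ^ β)) = 0 :=
      Finset.sum_eq_zero fun i hi => by rw [hTail0 i hi, zero_mul]
    have hptail : ∀ x : Fin n, k ≤ (x:ℕ) → p x = 0 := by
      intro x hx
      exact hTail0 x (by rw [hTail, Finset.mem_filter]; exact ⟨Finset.mem_univ x, by omega⟩)
    constructor
    · -- membership via the point mass on (0,1,...,k-1)
      set a₀ : Fin k → Fin n := fun j => ⟨(j:ℕ), lt_trans j.isLt hkn⟩ with ha₀
      refine ⟨fun a => if a = a₀ then 1 else 0, ⟨fun a => by positivity, by simp⟩, ?_⟩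
      have hsucc : ∀ x : Fin n, (x:ℕ) < k → succProb (fun a => if a = a₀ then 1 else 0) x = 1 := by
        intro x hx
        unfold succProb
        rw [Finset.sum_ite_eq' _ a₀ (fun _ => (1:ℝ)), if_pos]
        rw [Finset.mem_filter]
        exact ⟨Finset.mem_univ _, ⟨⟨(x:ℕ), hx⟩, by rw [ha₀]⟩⟩
      rw [hV0, mul_zero, ENNReal.ofReal_zero]
      symm
      apply Finset.sum_eq_zero
      intro x _
      by_cases hx : (x:ℕ) < k
      · rw [hsucc x hx, hloss1, mul_zero]
      · rw [hptail x (by omega), ENNReal.ofReal_zero, zero_mul]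
    · intro E _
      rw [hV0, mul_zero, ENNReal.ofReal_zero]
      exact zero_le
  · -- D > 0
    have hDne : D ≠ 0 := ne_of_gt hDpos
    have heTail : e ∈ Tail := by
      rw [hTail, Finset.mem_filter]; exact ⟨Finset.mem_univ _, le_refl _⟩
    have hconds' : mR * p e ^ α ≤ D := by
      have h2 : mR * p e ^ α / D ≤ 1 := hconds
      rwa [div_le_one hDpos] at h2
    set u : Fin n → ℝ := fun i => if s - 1 ≤ (i:ℕ) then mR * p i ^ α / D else 1 with hu
    have hu_tail : ∀ i ∈ Tail, u i = mR * p i ^ α / D := by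
      intro i hi
      rw [hu]
      exact if_pos (Finset.mem_filter.mp hi).2
    have hu0 : ∀ i, 0 ≤ u i := by
      intro i
      rw [hu]
      dsimp only
      split
      · exact div_nonneg (mul_nonneg hmRpos.le (Real.rpow_nonneg (hp0 i) α)) hD0
      · norm_num
    have hu1 : ∀ i, u i ≤ 1 := by
      intro i
      rw [hu]
      dsimp only
      split
      · rename_i hi
        rw [div_le_one hDpos]
        have h1 : p i ≤ p e := hsorted e i (by rw [Fin.le_def]; exact hi)
        have h2 : p i ^ α ≤ p e ^ α := Real.rpow_le_rpow (hp0 i) h1 hα.le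
        nlinarith
      · norm_num
    have husumR : ∑ i ∈ Tail, u i = mR := by
      have h1 : ∑ i ∈ Tail, u i = (mR / D) * D := by
        rw [hD, Finset.mul_sum]
        apply Finset.sum_congr rfl
        intro i hi
        rw [hu_tail i hi]; ring
      rw [h1]; field_simp
    have hcast : ((k + 1 - s : ℕ) : ℝ) = mR := by
      rw [Nat.cast_sub (by omega)]
      push_cast
      rw [hmR]; ring
    obtain ⟨Q₀, hQ₀strat, hQ₀head, hQ₀tail⟩ :=
      exists_strategy hk1 hkn s hs1 hsk u hu0 hu1 (by rw [hcast]; exact husumR)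
    constructor
    · -- membership
      refine ⟨Q₀, hQ₀strat, ?_⟩
      rw [← Finset.sum_filter_add_sum_filter_not Finset.univ
        (fun i : Fin n => s - 1 ≤ (i:ℕ))
        (fun i => ENNReal.ofReal (p i) * alphaLoss α (succProb Q₀ i))]
      have hHead0 : ∑ i ∈ Finset.univ.filter (fun i : Fin n => ¬ (s - 1 ≤ (i:ℕ))),
          ENNReal.ofReal (p i) * alphaLoss α (succProb Q₀ i) = 0 := by
        apply Finset.sum_eq_zero
        intro i hi
        have hlt : (i:ℕ) < s - 1 := by
          have := (Finset.mem_filter.mp hi).2; omega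
        rw [hQ₀head i hlt, hloss1, mul_zero]
      rw [hHead0, add_zero]
      have hterm : ∀ i ∈ Tail, ENNReal.ofReal (p i) * alphaLoss α (succProb Q₀ i)
          = ENNReal.ofReal (p i * (c * (1 - (mR * p i ^ α / D) ^ β))) := by
        intro i hi
        have hi' := (Finset.mem_filter.mp hi).2
        rw [hQ₀tail i hi', hu_tail i hi]
        apply term_eq (hp0 i)
        intro h1 _
        have h2 : p i ^ α = 0 := by
          rcases div_eq_zero_iff.mp h1 with h | h
          · rcases mul_eq_zero.mp h with h' | h'
            · exact absurd h' (ne_of_gt hmRpos)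
            · exact h'
          · exact absurd h hDne
        exact (Real.rpow_eq_zero (hp0 i) hα0).mp h2
      rw [Finset.sum_congr rfl hterm]
      have hnn : ∀ i ∈ Tail, 0 ≤ p i * (c * (1 - (mR * p i ^ α / D) ^ β)) := by
        intro i hi
        rcases eq_or_lt_of_le (hp0 i) with h | h
        · rw [← h, zero_mul]
        · have hui : 0 < mR * p i ^ α / D :=
            div_pos (mul_pos hmRpos (Real.rpow_pos_of_pos h α)) hDpos
          have hui1 : mR * p i ^ α / D ≤ 1 := by
            have := hu1 i
            rwa [hu_tail i hi] at this
          exact mul_nonneg h.le (loss_nonneg hα hα1 hui hui1)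
      rw [← ENNReal.ofReal_sum_of_nonneg hnn]
      congr 1
      rw [Finset.mul_sum]
      apply Finset.sum_congr rfl
      intro i _
      ring
    · -- lower bound
      rintro E ⟨Q, ⟨hQ0, hQ1⟩, rfl⟩
      set g : Fin n → ℝ := fun x => succProb Q x with hg
      have hg0 : ∀ x, 0 ≤ g x := by
        intro x
        exact Finset.sum_nonneg fun a _ => hQ0 a
      have hg1 : ∀ x, g x ≤ 1 := by
        intro x
        rw [← hQ1]
        exact Finset.sum_le_sum_of_subset_of_nonneg (Finset.filter_subset _ _)
          (fun a _ _ => hQ0 a)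
      have hgsum : ∑ x, g x ≤ (k:ℝ) := by
        have h1 : ∑ x, g x = ∑ a : Fin k → Fin n,
            ((Finset.univ.filter (fun x : Fin n => ∃ j, a j = x)).card : ℝ) * Q a := by
          rw [hg]
          unfold succProb
          rw [show (∑ x : Fin n, ∑ a ∈ Finset.univ.filter
              (fun a : Fin k → Fin n => ∃ j, a j = x), Q a)
            = ∑ x : Fin n, ∑ a : Fin k → Fin n, if ∃ j, a j = x then Q a else 0 by
              apply Finset.sum_congr rfl; intro x _; rw [Finset.sum_filter]]
          rw [Finset.sum_comm]
          apply Finset.sum_congr rfl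
          intro a _
          rw [← Finset.sum_filter, Finset.sum_const, nsmul_eq_mul]
        rw [h1]
        have h2 : ∀ a : Fin k → Fin n,
            ((Finset.univ.filter (fun x : Fin n => ∃ j, a j = x)).card : ℝ) * Q a
            ≤ (k:ℝ) * Q a := by
          intro a
          apply mul_le_mul_of_nonneg_right _ (hQ0 a)
          have h3 : Finset.univ.filter (fun x : Fin n => ∃ j, a j = x)
              = Finset.image a Finset.univ := by
            ext x; simp [eq_comm]
          rw [h3]
          calc ((Finset.image a Finset.univ).card : ℝ)
              ≤ ((Finset.univ : Finset (Fin k)).card : ℝ) := by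
                exact_mod_cast Finset.card_image_le
            _ = (k:ℝ) := by simp
        calc ∑ a : Fin k → Fin n, ((Finset.univ.filter
              (fun x : Fin n => ∃ j, a j = x)).card : ℝ) * Q a
            ≤ ∑ a : Fin k → Fin n, (k:ℝ) * Q a := Finset.sum_le_sum fun a _ => h2 a
          _ = (k:ℝ) := by rw [← Finset.mul_sum, hQ1, mul_one]
      by_cases hbad : ∃ i : Fin n, p i ≠ 0 ∧ g i = 0 ∧ α < 1
      · obtain ⟨i, hpi, hgi, hαlt⟩ := hbad
        have hterm : ENNReal.ofReal (p i) * alphaLoss α (succProb Q i) = ⊤ := by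
          unfold alphaLoss
          rw [if_pos ⟨hgi, hαlt⟩, ENNReal.mul_top]
          simp only [ne_eq, ENNReal.ofReal_eq_zero, not_le]
          exact lt_of_le_of_ne (hp0 i) (Ne.symm hpi)
        have htop : (∑ i, ENNReal.ofReal (p i) * alphaLoss α (succProb Q i)) = ⊤ :=
          ENNReal.sum_eq_top.mpr ⟨i, Finset.mem_univ i, hterm⟩
        rw [htop]
        exact le_top
      · push_neg at hbad
        have hgpos : ∀ i, p i ≠ 0 → α < 1 → 0 < g i := by
          intro i hpi hlt
          rcases eq_or_lt_of_le (hg0 i) with h | h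
          · exact absurd hlt (by simpa using hbad i hpi h.symm)
          · exact h
        -- the multiplier
        set lam : ℝ := (mR / D) ^ (β - 1) with hlam
        have hlampos : 0 < lam := Real.rpow_pos_of_pos (div_pos hmRpos hDpos) _
        -- head masses dominate lam
        have hplam : ∀ i : Fin n, (i:ℕ) < s - 1 → lam ≤ p i := by
          intro i hi
          have hs2 : 2 ≤ s := by omega
          have hsn2 : s - 2 < n := by omega
          set e' : Fin n := ⟨s - 2, hsn2⟩ with he'
          have hD'eq : (∑ j ∈ Finset.univ.filter
              (fun j : Fin n => s - 1 - 1 ≤ (j:ℕ)), p j ^ α) = p e' ^ α + D := by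
            have hset : Finset.univ.filter (fun j : Fin n => s - 1 - 1 ≤ (j:ℕ))
                = insert e' Tail := by
              ext j
              simp only [Finset.mem_filter, Finset.mem_univ, true_and,
                Finset.mem_insert, hTail, he', Fin.ext_iff]
              omega
            rw [hset, Finset.sum_insert (by
              rw [hTail, Finset.mem_filter]
              simp only [Finset.mem_univ, true_and, he']
              omega), hD]
          have hkey : D < mR * p e' ^ α := by
            by_contra hcon
            push_neg at hcon
            have hmem2 : (s - 1) ∈ {r : ℕ | ∃ h : 1 ≤ r ∧ r ≤ k,
                ((k : ℝ) - r + 1) * p ⟨r - 1, by omega⟩ ^ α /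
                  (∑ i ∈ Finset.univ.filter (fun i : Fin n => r - 1 ≤ (i : ℕ)),
                    p i ^ α) ≤ 1} := by
              refine ⟨⟨by omega, by omega⟩, ?_⟩
              have hidx : p (⟨s - 1 - 1, by omega⟩ : Fin n) = p e' := rfl
              rw [hidx, hD'eq]
              have hpos' : 0 < p e' ^ α + D :=
                add_pos_of_nonneg_of_pos (Real.rpow_nonneg (hp0 e') α) hDpos
              rw [div_le_one hpos']
              have hc1 : ((s - 1 : ℕ) : ℝ) = (s:ℝ) - 1 := by
                rw [Nat.cast_sub hs1]; norm_num
              rw [hc1]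
              have : (k:ℝ) - ((s:ℝ) - 1) + 1 = mR + 1 := by rw [hmR]; ring
              rw [this]
              nlinarith [Real.rpow_nonneg (hp0 e') α]
            have := hmin hmem2
            omega
          -- lam ≤ p e' ≤ p i
          have h1 : D / mR < p e' ^ α := by
            rw [div_lt_iff₀ hmRpos]
            linarith
          have h2 : p e' ≤ p i := hsorted i e' (by
            rw [Fin.le_def]
            simp only [he']
            omega)
          have h3 : lam = (D / mR) ^ (1 / α) := by
            rw [hlam]
            have hb1 : β - 1 = -(1/α) := by
              rw [hβ]; field_simp; ring
            rw [hb1, Real.rpow_neg (le_of_lt (div_pos hmRpos hDpos)),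
              ← Real.inv_rpow (le_of_lt (div_pos hmRpos hDpos)), inv_div]
          have h4 : (D / mR) ^ (1/α) ≤ (p e' ^ α) ^ (1/α) :=
            Real.rpow_le_rpow (div_nonneg hD0 hmRpos.le) h1.le (by positivity)
          have h5 : (p e' ^ α) ^ (1/α) = p e' := by
            rw [← Real.rpow_mul (hp0 e'), mul_one_div_cancel hα0, Real.rpow_one]
          rw [h3]
          calc (D / mR) ^ (1/α) ≤ (p e' ^ α) ^ (1/α) := h4
            _ = p e' := h5
            _ ≤ p i := h2
        -- per-coordinate tangent bound
        have hclaim : ∀ i : Fin n,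
            p i * (c * (1 - u i ^ β)) - lam * (g i - u i) ≤ p i * (c * (1 - g i ^ β)) := by
          intro i
          by_cases hi : s - 1 ≤ (i:ℕ)
          · have hiT : i ∈ Tail := by
              rw [hTail, Finset.mem_filter]; exact ⟨Finset.mem_univ _, hi⟩
            by_cases hpi : p i = 0
            · have hui : u i = 0 := by
                rw [hu_tail i hiT, hpi, Real.zero_rpow hα0, mul_zero, zero_div]
              rw [hpi, hui]
              have hnn0 : 0 ≤ lam * g i := mul_nonneg hlampos.le (hg0 i)
              linarith [hnn0]
            · have hpip : 0 < p i := lt_of_le_of_ne (hp0 i) (Ne.symm hpi)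
              have huipos : 0 < u i := by
                rw [hu_tail i hiT]
                exact div_pos (mul_pos hmRpos (Real.rpow_pos_of_pos hpip α)) hDpos
              have htan := tangent_ineq hα hα1 huipos (hg0 i) (hgpos i hpi)
              have htan' := mul_le_mul_of_nonneg_left htan (hp0 i)
              have hlameq : p i * u i ^ (β - 1) = lam := by
                have hrw : u i = (mR / D) * p i ^ α := by
                  rw [hu_tail i hiT]; ring
                rw [hrw, Real.mul_rpow (div_nonneg hmRpos.le hD0)
                  (Real.rpow_nonneg (hp0 i) α), ← Real.rpow_mul (hp0 i)]
                have hexp : α * (β - 1) = -1 := by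
                  rw [hβ]; field_simp; ring
                rw [hexp, Real.rpow_neg_one, hlam]
                field_simp
              calc p i * (c * (1 - u i ^ β)) - lam * (g i - u i)
                  = p i * (c * (1 - u i ^ β) - u i ^ (β - 1) * (g i - u i)) := by
                    rw [← hlameq]; ring
                _ ≤ p i * (c * (1 - g i ^ β)) := htan'
          · -- head
            have hlamle : lam ≤ p i := hplam i (by omega)
            have hpip : 0 < p i := lt_of_lt_of_le hlampos hlamle
            have hui : u i = 1 := by rw [hu]; exact if_neg hi
            have htan := tangent_ineq hα hα1 (zero_lt_one) (hg0 i)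
              (hgpos i (ne_of_gt hpip))
            rw [Real.one_rpow, Real.one_rpow] at htan
            have htan2 : -(g i - 1) ≤ c * (1 - g i ^ β) := by linarith
            have fact1 := mul_le_mul_of_nonneg_left htan2 (hp0 i)
            have fact2 := mul_le_mul_of_nonneg_right hlamle (sub_nonneg.mpr (hg1 i))
            rw [hui, Real.one_rpow]
            linarith [fact1, fact2]
        -- sum everything
        have husumall : ∑ i, u i = (k:ℝ) := by
          rw [← Finset.sum_filter_add_sum_filter_not Finset.univ
            (fun i : Fin n => s - 1 ≤ (i:ℕ)) u]
          have hh : ∑ i ∈ Finset.univ.filter (fun i : Fin n => ¬ (s - 1 ≤ (i:ℕ))), u i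
              = ((s:ℝ) - 1) := by
            have hones : ∀ i ∈ Finset.univ.filter (fun i : Fin n => ¬ (s - 1 ≤ (i:ℕ))),
                u i = 1 := by
              intro i hi
              rw [hu]
              exact if_neg (Finset.mem_filter.mp hi).2
            rw [Finset.sum_congr rfl hones, Finset.sum_const, nsmul_eq_mul, mul_one]
            have hsetIio : Finset.univ.filter (fun i : Fin n => ¬ (s - 1 ≤ (i:ℕ)))
                = Finset.Iio e := by
              ext j
              simp only [Finset.mem_filter, Finset.mem_univ, true_and,
                Finset.mem_Iio, Fin.lt_def, he]
              omega
            rw [hsetIio, Fin.card_Iio]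
            simp only [he]
            rw [Nat.cast_sub hs1]
            norm_num
          rw [hh, husumR, hmR]
          ring
        have hreal : c * (∑ i ∈ Tail, p i * (1 - (mR * p i ^ α / D) ^ β))
            ≤ ∑ i, p i * (c * (1 - g i ^ β)) := by
          have h1 : ∑ i, (p i * (c * (1 - u i ^ β)) - lam * (g i - u i))
              ≤ ∑ i, p i * (c * (1 - g i ^ β)) :=
            Finset.sum_le_sum fun i _ => hclaim i
          have h2 : ∑ i, (p i * (c * (1 - u i ^ β)) - lam * (g i - u i))
              = (∑ i, p i * (c * (1 - u i ^ β))) - lam * ((∑ i, g i) - (∑ i, u i)) := by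
            rw [Finset.sum_sub_distrib, ← Finset.mul_sum]
            congr 1
            rw [Finset.sum_sub_distrib]
          have h3 : ∑ i, p i * (c * (1 - u i ^ β))
              = c * (∑ i ∈ Tail, p i * (1 - (mR * p i ^ α / D) ^ β)) := by
            rw [← Finset.sum_filter_add_sum_filter_not Finset.univ
              (fun i : Fin n => s - 1 ≤ (i:ℕ)) (fun i => p i * (c * (1 - u i ^ β)))]
            have hh0 : ∑ i ∈ Finset.univ.filter (fun i : Fin n => ¬ (s - 1 ≤ (i:ℕ))),
                p i * (c * (1 - u i ^ β)) = 0 := by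
              apply Finset.sum_eq_zero
              intro i hi
              have : u i = 1 := by rw [hu]; exact if_neg (Finset.mem_filter.mp hi).2
              rw [this, Real.one_rpow]
              ring
            rw [hh0, add_zero, Finset.mul_sum]
            apply Finset.sum_congr rfl
            intro i hi
            rw [hu_tail i hi]
            ring
          rw [h2, h3, husumall] at h1
          have h4 : 0 ≤ lam * ((k:ℝ) - ∑ i, g i) := by
            apply mul_nonneg hlampos.le
            linarith
          calc c * (∑ i ∈ Tail, p i * (1 - (mR * p i ^ α / D) ^ β))
              ≤ c * (∑ i ∈ Tail, p i * (1 - (mR * p i ^ α / D) ^ β))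
                - lam * ((∑ i, g i) - (k:ℝ)) := by linarith [h4]
            _ ≤ ∑ i, p i * (c * (1 - g i ^ β)) := h1
        have hnn : ∀ i ∈ Finset.univ, 0 ≤ p i * (c * (1 - g i ^ β)) := by
          intro i _
          rcases eq_or_lt_of_le (hp0 i) with h | h
          · rw [← h, zero_mul]
          rcases eq_or_lt_of_le (hg0 i) with h2 | h2
          · have hα2 : ¬ α < 1 := by simpa using hbad i (ne_of_gt h) h2.symm
            have hα3 : 1 < α := lt_of_le_of_ne (not_lt.mp hα2) (Ne.symm hα1)
            rw [← h2, Real.zero_rpow (by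
              rw [hβ]
              exact div_ne_zero hα1' hα0), sub_zero, mul_one]
            have : 0 < c := by rw [hc]; exact div_pos hα (by linarith)
            positivity
          · exact mul_nonneg h.le (loss_nonneg hα hα1 h2 (hg1 i))
        calc ENNReal.ofReal (c * ∑ i ∈ Tail, p i * (1 - (mR * p i ^ α / D) ^ β))
            ≤ ENNReal.ofReal (∑ i, p i * (c * (1 - g i ^ β))) :=
              ENNReal.ofReal_le_ofReal hreal
          _ = ∑ i, ENNReal.ofReal (p i * (c * (1 - g i ^ β))) :=
              ENNReal.ofReal_sum_of_nonneg hnn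
          _ ≤ ∑ i, ENNReal.ofReal (p i) * alphaLoss α (succProb Q i) :=
              Finset.sum_le_sum fun i _ => term_le (hp0 i)
end

section
/- Let X be supported on 𝒳 = {x_1,...,x_n}, let 1 ≤ k < n, and let α ∈ (0,∞]. If Q* is a k-guess strategy achieving the minimum in the definition of ME^{(k)}_α(P_X), then Q*(a_1,...,a_k) = 0 for every tuple (a_1,...,a_k) ∈ 𝒳^k such that a_i = a_j for some i ≠ j. -/
open Finset
open scoped ENNReal

/-- The `α`-loss for `α ∈ (0,∞]`, valued in `ℝ≥0∞`: for `α = ∞` it is `1 - p`, for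
`α = 1` it is `log(1/p)` (so `+∞` at `p = 0`), and otherwise it is
`(α/(α-1))(1 - p^{(α-1)/α})` (which is `+∞` at `p = 0` when `α < 1`). -/
noncomputable def alphaLossE (α : ℝ≥0∞) (p : ℝ) : ℝ≥0∞ :=
  if α = ⊤ then ENNReal.ofReal (1 - p)
  else if α = 1 then (if p = 0 then ⊤ else ENNReal.ofReal (Real.log (1 / p)))
  else if p = 0 ∧ α < 1 then ⊤
  else ENNReal.ofReal ((α.toReal / (α.toReal - 1)) * (1 - p ^ ((α.toReal - 1) / α.toReal)))


/-! If an optimal strategy put mass on a tuple `a` with a repeated guess, some outcome `x` is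
guessed by no entry of `a` (there are fewer than `n` distinct entries). Replacing one of the two
equal entries of `a` by `x` and moving the mass of `a` onto the new tuple keeps every other
success probability unchanged and strictly increases that of `x`. Since the `α`-loss is
strictly decreasing and the optimal expected loss is finite (the uniform strategy already gives
every outcome positive success probability), the expected loss strictly drops, contradicting
optimality. -/

theorem ENNReal.sum_lt_sum_of_le_of_lt {ι : Type*} [DecidableEq ι] {s : Finset ι}
    {f g : ι → ℝ≥0∞} {x : ι} (hx : x ∈ s) (hg : ∑ i ∈ s, g i ≠ ⊤)
    (hle : ∀ i ∈ s, f i ≤ g i) (hlt : f x < g x) : ∑ i ∈ s, f i < ∑ i ∈ s, g i := by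
  have hle_erase : ∑ i ∈ s.erase x, f i ≤ ∑ i ∈ s.erase x, g i :=
    sum_le_sum fun i hi => hle i (mem_of_mem_erase hi)
  have hg_erase : ∑ i ∈ s.erase x, g i ≠ ⊤ :=
    ENNReal.sum_ne_top.2 fun i hi => ENNReal.sum_ne_top.1 hg i (mem_of_mem_erase hi)
  rw [← add_sum_erase s f hx, ← add_sum_erase s g hx]
  exact ENNReal.add_lt_add_of_lt_of_le (ne_top_of_le_ne_top hg_erase hle_erase) hlt hle_erase

theorem inv_mul_one_sub_rpow_lt {β s t : ℝ} (hβ : β ≠ 0) (hs : 0 < s ∨ 0 < β ∧ 0 ≤ s)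
    (hst : s < t) : β⁻¹ * (1 - t ^ β) < β⁻¹ * (1 - s ^ β) := by
  rcases hβ.lt_or_gt with hβ | hβ
  · have hs : 0 < s := hs.resolve_right fun h => h.1.not_gt hβ
    exact mul_lt_mul_of_neg_left (by linarith [Real.rpow_lt_rpow_of_neg hs hst hβ])
      (inv_lt_zero.2 hβ)
  · have hs : 0 ≤ s := hs.elim le_of_lt And.right
    exact mul_lt_mul_of_pos_left (by linarith [Real.rpow_lt_rpow hs hst hβ]) (inv_pos.2 hβ)

theorem alphaLossE_ne_top (α : ℝ≥0∞) {p : ℝ} (hp : p ≠ 0) : alphaLossE α p ≠ ⊤ := by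
  unfold alphaLossE
  split_ifs <;> simp_all

theorem alphaLossE_lt_alphaLossE {α : ℝ≥0∞} (hα : 0 < α) {s t : ℝ} (hs : 0 ≤ s)
    (hst : s < t) (ht : t ≤ 1) : alphaLossE α t < alphaLossE α s := by
  have hs1 : s < 1 := hst.trans_le ht
  have ht0 : t ≠ 0 := (hs.trans_lt hst).ne'
  -- each branch of the loss vanishes at `1`, which supplies the positivity `ofReal` needs
  have ofReal_lt {f : ℝ → ℝ} (hf1 : f 1 = 0) (hf : ∀ u, s < u → f u < f s) :
      ENNReal.ofReal (f t) < ENNReal.ofReal (f s) :=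
    (ENNReal.ofReal_lt_ofReal_iff (hf1 ▸ hf 1 hs1)).2 (hf t hst)
  simp only [alphaLossE, ht0, false_and, if_false]
  split_ifs with hα_top hα_one hs0 hs0
  · exact ofReal_lt (by simp) fun u hu => by linarith
  · exact ENNReal.ofReal_lt_top
  · have hs : 0 < s := lt_of_le_of_ne hs (Ne.symm hs0)
    refine ofReal_lt (f := fun u => Real.log (1 / u)) (by simp) fun u hu => ?_
    exact Real.log_lt_log (one_div_pos.2 (hs.trans hu)) (one_div_lt_one_div_of_lt hs hu)
  · exact ENNReal.ofReal_lt_top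
  · have hA : 0 < α.toReal := ENNReal.toReal_pos hα.ne' hα_top
    have hA1 : α.toReal ≠ 1 := fun h => hα_one <| by
      rw [← ENNReal.ofReal_toReal hα_top, h, ENNReal.ofReal_one]
    have hβ : (α.toReal - 1) / α.toReal ≠ 0 := div_ne_zero (sub_ne_zero.2 hA1) hA.ne'
    have hsβ : 0 < s ∨ 0 < (α.toReal - 1) / α.toReal ∧ 0 ≤ s := by
      rcases hs.lt_or_eq with hs | hs
      · exact Or.inl hs
      · have h1α : 1 < α :=
          lt_of_le_of_ne (not_lt.1 fun h => hs0 ⟨hs.symm, h⟩) (Ne.symm hα_one)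
        have : 1 < α.toReal := by
          simpa using (ENNReal.toReal_lt_toReal ENNReal.one_ne_top hα_top).2 h1α
        exact Or.inr ⟨div_pos (by linarith) hA, hs.le⟩
    rw [← inv_div]
    exact ofReal_lt (f := fun u => ((α.toReal - 1) / α.toReal)⁻¹ * (1 - u ^ _)) (by simp)
      fun u hu => inv_mul_one_sub_rpow_lt hβ hsβ hu

theorem Set.range_update_of_apply_eq {ι α : Type*} [DecidableEq ι] {f : ι → α} {i j : ι}
    (hij : i ≠ j) (h : f i = f j) (x : α) :
    Set.range (Function.update f j x) = insert x (Set.range f) := by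
  ext y
  constructor
  · rintro ⟨m, rfl⟩
    by_cases hm : m = j
    · simp [hm]
    · exact Or.inr ⟨m, (Function.update_of_ne hm x f).symm⟩
  · rintro (rfl | ⟨m, rfl⟩)
    · exact ⟨j, Function.update_self j y f⟩
    by_cases hm : m = j
    · exact ⟨i, by rw [Function.update_of_ne hij, h, hm]⟩
    · exact ⟨m, Function.update_of_ne hm x f⟩

section Strategy

variable {n k : ℕ}

theorem succProb_nonneg {Q : (Fin k → Fin n) → ℝ} (hQ : IsStrategy Q) (x : Fin n) :
    0 ≤ succProb Q x :=
  sum_nonneg fun a _ => hQ.1 a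

theorem succProb_le_one {Q : (Fin k → Fin n) → ℝ} (hQ : IsStrategy Q) (x : Fin n) :
    succProb Q x ≤ 1 :=
  hQ.2 ▸ sum_le_sum_of_subset_of_nonneg (subset_univ _) fun a _ _ => hQ.1 a

theorem succProb_pos [Nonempty (Fin k)] {Q : (Fin k → Fin n) → ℝ} (hQ : ∀ a, 0 < Q a)
    (x : Fin n) : 0 < succProb Q x :=
  sum_pos (fun a _ => hQ a) ⟨fun _ => x, by simp⟩

def moveMass {β : Type*} [DecidableEq β] (Q : β → ℝ) (a b : β) : β → ℝ :=
  Q + Pi.single b (Q a) - Pi.single a (Q a)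

theorem sum_moveMass {β : Type*} [DecidableEq β] (Q : β → ℝ) (a b : β) (S : Finset β) :
    ∑ c ∈ S, moveMass Q a b c =
      ∑ c ∈ S, Q c + (if b ∈ S then Q a else 0) - (if a ∈ S then Q a else 0) := by
  simp only [moveMass, Pi.add_apply, Pi.sub_apply, sum_add_distrib, sum_sub_distrib,
    sum_pi_single']

theorem IsStrategy.moveMass {Q : (Fin k → Fin n) → ℝ} (hQ : IsStrategy Q)
    (a b : Fin k → Fin n) : IsStrategy (moveMass Q a b) := by
  refine ⟨fun c => ?_, by simp [sum_moveMass, hQ.2]⟩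
  simp only [_root_.moveMass, Pi.add_apply, Pi.sub_apply, Pi.single_apply]
  rcases eq_or_ne c a with rfl | hca
  · rw [if_pos rfl]
    split_ifs <;> linarith [hQ.1 c]
  · rw [if_neg hca]
    split_ifs <;> linarith [hQ.1 a, hQ.1 c]

theorem succProb_moveMass (Q : (Fin k → Fin n) → ℝ) (a b : Fin k → Fin n) (x : Fin n) :
    succProb (moveMass Q a b) x = succProb Q x + (if x ∈ Set.range b then Q a else 0) -
      (if x ∈ Set.range a then Q a else 0) := by
  simp only [succProb, sum_moveMass, mem_filter, mem_univ, true_and, Set.mem_range]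

theorem succProb_moveMass_of_range_eq_insert (Q : (Fin k → Fin n) → ℝ) {a b : Fin k → Fin n}
    {x : Fin n} (hb : Set.range b = insert x (Set.range a)) (hx : x ∉ Set.range a) :
    succProb (moveMass Q a b) = Function.update (succProb Q) x (succProb Q x + Q a) := by
  funext y
  rcases eq_or_ne y x with rfl | hy
  · simp [succProb_moveMass, hb, hx]
  · simp [succProb_moveMass, hb, hy]

noncomputable def uniformStrategy (n k : ℕ) : (Fin k → Fin n) → ℝ :=
  fun _ => ((n : ℝ) ^ k)⁻¹

theorem uniformStrategy_pos (hn : n ≠ 0) (a : Fin k → Fin n) : 0 < uniformStrategy n k a := by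
  unfold uniformStrategy
  positivity

theorem isStrategy_uniformStrategy (hn : n ≠ 0) : IsStrategy (uniformStrategy n k) := by
  refine ⟨fun a => (uniformStrategy_pos hn a).le, ?_⟩
  simp [uniformStrategy, hn]

noncomputable def expectedLossE (α : ℝ≥0∞) (p : Fin n → ℝ)
    (Q : (Fin k → Fin n) → ℝ) : ℝ≥0∞ :=
  ∑ x, ENNReal.ofReal (p x) * alphaLossE α (succProb Q x)

theorem expectedLossE_ne_top (α : ℝ≥0∞) (p : Fin n → ℝ) {Q : (Fin k → Fin n) → ℝ}
    (hQ : ∀ x, succProb Q x ≠ 0) : expectedLossE α p Q ≠ ⊤ :=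
  ENNReal.sum_ne_top.2 fun x _ =>
    ENNReal.mul_ne_top ENNReal.ofReal_ne_top (alphaLossE_ne_top α (hQ x))

theorem expectedLossE_lt_expectedLossE {α : ℝ≥0∞} {p : Fin n → ℝ}
    {Q Q' : (Fin k → Fin n) → ℝ} {x : Fin n} (hpx : 0 < p x)
    (hQ : expectedLossE α p Q ≠ ⊤)
    (heq : ∀ y ≠ x, succProb Q' y = succProb Q y)
    (hlt : alphaLossE α (succProb Q' x) < alphaLossE α (succProb Q x)) :
    expectedLossE α p Q' < expectedLossE α p Q := by
  refine ENNReal.sum_lt_sum_of_le_of_lt (mem_univ x) hQ (fun y _ => ?_)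
    ((ENNReal.mul_lt_mul_iff_right (by simpa using hpx) ENNReal.ofReal_ne_top).2 hlt)
  rcases eq_or_ne y x with rfl | hy
  · gcongr
  · rw [heq y hy]

end Strategy

theorem optimal_strategy_vanishes_on_repeats_general
    {n k : ℕ} (hkn : k < n)
    (α : ℝ≥0∞) (hα : 0 < α)
    (p : Fin n → ℝ) (hp0 : ∀ i, 0 < p i)
    (Q : (Fin k → Fin n) → ℝ) (hQ : IsStrategy Q)
    (hopt : ∀ Q' : (Fin k → Fin n) → ℝ, IsStrategy Q' →
      (∑ i, ENNReal.ofReal (p i) * alphaLossE α (succProb Q i)) ≤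
        ∑ i, ENNReal.ofReal (p i) * alphaLossE α (succProb Q' i)) :
    ∀ a : Fin k → Fin n, (∃ i j, i ≠ j ∧ a i = a j) → Q a = 0 := by
  rintro a ⟨i, j, hij, haij⟩
  by_contra hQa
  have : Nonempty (Fin k) := ⟨i⟩
  obtain ⟨x, hx⟩ : ∃ x, x ∉ Set.range a := by
    by_contra! h
    exact (Fintype.card_le_of_surjective a h).not_gt (by simpa using hkn)
  have hn : n ≠ 0 := by omega
  have hfin : expectedLossE α p Q ≠ ⊤ :=
    ne_top_of_le_ne_top
      (expectedLossE_ne_top α p fun y => (succProb_pos (uniformStrategy_pos hn) y).ne')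
      (hopt _ (isStrategy_uniformStrategy hn))
  have hQ' := hQ.moveMass a (Function.update a j x)
  have hsucc :=
    succProb_moveMass_of_range_eq_insert Q (Set.range_update_of_apply_eq hij haij x) hx
  refine (hopt _ hQ').not_gt (expectedLossE_lt_expectedLossE (hp0 x) hfin
    (fun y hy => by rw [hsucc, Function.update_of_ne hy]) ?_)
  have hQx_le_one := succProb_le_one hQ' x
  rw [hsucc, Function.update_self] at hQx_le_one ⊢
  exact alphaLossE_lt_alphaLossE hα (succProb_nonneg hQ x)
    (lt_add_of_pos_right _ (lt_of_le_of_ne (hQ.1 a) (Ne.symm hQa))) hQx_le_one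

/-- **Lemma 1**: an optimal `k`-guess strategy puts zero probability on tuples with a
repeated guess. -/
theorem optimal_strategy_vanishes_on_repeats
    {n k : ℕ} (hk1 : 1 ≤ k) (hkn : k < n)
    (α : ℝ≥0∞) (hα : 0 < α)
    (p : Fin n → ℝ) (hp0 : ∀ i, 0 < p i) (hp1 : ∑ i, p i = 1)
    (Q : (Fin k → Fin n) → ℝ) (hQ : IsStrategy Q)
    (hopt : ∀ Q' : (Fin k → Fin n) → ℝ, IsStrategy Q' →
      (∑ i, ENNReal.ofReal (p i) * alphaLossE α (succProb Q i)) ≤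
        ∑ i, ENNReal.ofReal (p i) * alphaLossE α (succProb Q' i)) :
    ∀ a : Fin k → Fin n, (∃ i j, i ≠ j ∧ a i = a j) → Q a = 0 :=
  optimal_strategy_vanishes_on_repeats_general hkn α hα p hp0 Q hQ hopt
end

section
/- Let 𝒳 = {x_1,...,x_n} be a finite set and 1 ≤ k ≤ n. A vector (t_1,...,t_n) of real numbers with Σ_{i=1}^{n} t_i = k is admissible (i.e., there exists a probability mass function Q on 𝒳^k such that t_i = g_Q(x_i) for all i ∈ [1:n]) if and only if 0 ≤ t_i ≤ 1 for all i ∈ [1:n]. -/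
open Finset

/-!
Success probabilities are linear in the strategy, so the admissible vectors form the image of
the standard simplex under a linear map: a compact convex set. A deterministic strategy guessing
`k` distinct symbols realises every `0/1` vector with coordinate sum `k`, and these are the
extreme points of the hypersimplex `{t ∈ [0,1]ⁿ | ∑ t = k}`: a point with a fractional
coordinate has a second one, because the coordinate sum is an integer, and shifting mass between
the two in either direction exhibits it as a midpoint. By Krein–Milman the hypersimplex lies in
the admissible set; conversely `0 ≤ g_Q ≤ 1` is immediate.
-/

section Hypersimplex

def hypersimplex (ι : Type*) [Fintype ι] (k : ℕ) : Set (ι → ℝ) :=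
  Set.univ.pi (fun _ => Set.Icc 0 1) ∩ {t | ∑ i, t i = k}

variable {ι : Type*} [Fintype ι]

theorem convex_hypersimplex (k : ℕ) : Convex ℝ (hypersimplex ι k) :=
  (convex_pi fun _ _ => convex_Icc 0 1).inter <| convex_hyperplane
    ⟨fun _ _ => sum_add_distrib, fun _ _ => (mul_sum _ _ _).symm⟩ _

theorem isCompact_hypersimplex (k : ℕ) : IsCompact (hypersimplex ι k) :=
  (isCompact_univ_pi fun _ => isCompact_Icc).inter_right <|
    isClosed_eq (by fun_prop) continuous_const

theorem exists_ne_mem_Ioo_of_mem_hypersimplex {k : ℕ} {t : ι → ℝ}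
    (ht : t ∈ hypersimplex ι k) {i : ι} (hi : t i ∈ Set.Ioo 0 1) :
    ∃ j ≠ i, t j ∈ Set.Ioo 0 1 := by
  classical
  by_contra! h
  have h01 : ∀ j ∈ univ.erase i, t j = if t j = 1 then 1 else 0 := by
    intro j hj
    obtain ⟨h0, h1⟩ := ht.1 j trivial
    split_ifs with hj1
    · exact hj1
    · by_contra hj0
      exact h j (ne_of_mem_erase hj) ⟨lt_of_le_of_ne h0 (Ne.symm hj0), lt_of_le_of_ne h1 hj1⟩
  -- all other coordinates are `0` or `1`, so `t i` would be the integer `k - #{j ≠ i | t j = 1}`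
  have hsum : t i + #{j ∈ univ.erase i | t j = 1} = k := by
    rw [← sum_boole, ← sum_congr rfl h01, add_sum_erase _ _ (mem_univ i), ht.2]
  obtain ⟨hi0, hi1⟩ := hi
  have hlt : (#{j ∈ univ.erase i | t j = 1} : ℝ) < k := by linarith
  have hgt : (k : ℝ) < #{j ∈ univ.erase i | t j = 1} + 1 := by linarith
  norm_cast at hlt hgt
  omega

theorem add_single_sub_single_mem_hypersimplex [DecidableEq ι] {k : ℕ} {t : ι → ℝ}
    (ht : t ∈ hypersimplex ι k) {i j : ι} (hij : i ≠ j) {ε : ℝ}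
    (hi : t i + ε ∈ Set.Icc 0 1) (hj : t j - ε ∈ Set.Icc 0 1) :
    t + Pi.single i ε - Pi.single j ε ∈ hypersimplex ι k := by
  refine ⟨fun x _ => ?_, ?_⟩
  · by_cases hxi : x = i
    · subst hxi; simpa [hij] using hi
    by_cases hxj : x = j
    · subst hxj; simpa [Ne.symm hij] using hj
    · simpa [hxi, hxj] using ht.1 x trivial
  · simpa [sum_add_distrib, sum_sub_distrib] using ht.2

theorem eq_zero_or_eq_one_of_mem_extremePoints_hypersimplex {k : ℕ} {t : ι → ℝ}
    (ht : t ∈ (hypersimplex ι k).extremePoints ℝ) (i : ι) : t i = 0 ∨ t i = 1 := by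
  classical
  obtain ⟨ht, hext⟩ := ht
  by_contra! hi01
  have hi : t i ∈ Set.Ioo 0 1 := ⟨lt_of_le_of_ne (ht.1 i trivial).1 (Ne.symm hi01.1),
    lt_of_le_of_ne (ht.1 i trivial).2 hi01.2⟩
  obtain ⟨j, hji, hj⟩ := exists_ne_mem_Ioo_of_mem_hypersimplex ht hi
  obtain ⟨ε, hε, hεi, hεi', hεj, hεj'⟩ :
      ∃ ε : ℝ, 0 < ε ∧ ε ≤ t i ∧ ε ≤ 1 - t i ∧ ε ≤ t j ∧ ε ≤ 1 - t j :=
    ⟨min (min (t i) (1 - t i)) (min (t j) (1 - t j)),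
      lt_min (lt_min hi.1 (sub_pos.2 hi.2)) (lt_min hj.1 (sub_pos.2 hj.2)), by simp⟩
  have hplus := add_single_sub_single_mem_hypersimplex ht hji.symm (ε := ε)
    ⟨by linarith, by linarith⟩ ⟨by linarith, by linarith⟩
  have hminus := add_single_sub_single_mem_hypersimplex ht hji.symm (ε := -ε)
    ⟨by linarith, by linarith⟩ ⟨by linarith, by linarith⟩
  have hmid : t ∈ openSegment ℝ (t + Pi.single i ε - Pi.single j ε)
      (t + Pi.single i (-ε) - Pi.single j (-ε)) :=
    ⟨1 / 2, 1 / 2, by norm_num, by norm_num, by norm_num, by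
      rw [Pi.single_neg, Pi.single_neg]; module⟩
  have hti := congrFun (hext hplus hminus hmid) i
  simp [hji.symm] at hti
  linarith

end Hypersimplex

section Admissible

variable {n k : ℕ}

noncomputable def succProbLinearMap (n k : ℕ) :
    ((Fin k → Fin n) → ℝ) →ₗ[ℝ] Fin n → ℝ where
  toFun := succProb
  map_add' _ _ := by ext; simp only [succProb, Pi.add_apply, sum_add_distrib]
  map_smul' _ _ := by
    ext; simp only [succProb, Pi.smul_apply, smul_eq_mul, mul_sum, RingHom.id_apply]

def admissibleSet (n k : ℕ) : Set (Fin n → ℝ) :=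
  succProbLinearMap n k '' stdSimplex ℝ (Fin k → Fin n)

theorem mem_admissibleSet {t : Fin n → ℝ} :
    t ∈ admissibleSet n k ↔
      ∃ Q : (Fin k → Fin n) → ℝ, IsStrategy Q ∧ ∀ i, t i = succProb Q i :=
  ⟨fun ⟨Q, hQ, hQt⟩ => ⟨Q, hQ, fun i => congrFun hQt.symm i⟩,
    fun ⟨Q, hQ, hQt⟩ => ⟨Q, hQ, funext fun i => (hQt i).symm⟩⟩

theorem convex_admissibleSet : Convex ℝ (admissibleSet n k) :=
  (convex_stdSimplex ℝ _).linear_image _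

theorem isClosed_admissibleSet : IsClosed (admissibleSet n k) :=
  ((isCompact_stdSimplex ℝ _).image (LinearMap.continuous_of_finiteDimensional _)).isClosed

theorem succProb_mem_Icc {Q : (Fin k → Fin n) → ℝ} (hQ : IsStrategy Q) (x : Fin n) :
    succProb Q x ∈ Set.Icc 0 1 :=
  ⟨sum_nonneg fun a _ => hQ.1 a,
    hQ.2 ▸ sum_le_sum_of_subset_of_nonneg (filter_subset _ _) fun a _ _ => hQ.1 a⟩

theorem succProb_single (a : Fin k → Fin n) :
    succProb (Pi.single a 1) = (Set.range a).indicator 1 := by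
  classical
  ext x
  rw [succProb, sum_pi_single']
  simp [Set.indicator_apply]

theorem indicator_mem_admissibleSet {S : Finset (Fin n)} (hS : #S = k) :
    (S : Set (Fin n)).indicator 1 ∈ admissibleSet n k := by
  refine ⟨Pi.single (S.orderEmbOfFin hS) 1, single_mem_stdSimplex ℝ _, ?_⟩
  rw [succProbLinearMap, LinearMap.coe_mk, AddHom.coe_mk, succProb_single, range_orderEmbOfFin]

theorem mem_admissibleSet_of_forall_eq_zero_or_eq_one {t : Fin n → ℝ}
    (h01 : ∀ i, t i = 0 ∨ t i = 1) (ht : ∑ i, t i = k) : t ∈ admissibleSet n k := by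
  classical
  have htS : t = (({i | t i = 1} : Finset (Fin n)) : Set (Fin n)).indicator 1 := by
    ext i; rcases h01 i with h | h <;> simp [h]
  rw [htS] at ht ⊢
  apply indicator_mem_admissibleSet
  simpa [Set.indicator_apply] using ht

theorem hypersimplex_subset_admissibleSet : hypersimplex (Fin n) k ⊆ admissibleSet n k := by
  have hext : (hypersimplex (Fin n) k).extremePoints ℝ ⊆ admissibleSet n k := fun _ ht =>
    mem_admissibleSet_of_forall_eq_zero_or_eq_one
      (eq_zero_or_eq_one_of_mem_extremePoints_hypersimplex ht) (extremePoints_subset ht).2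
  rw [← closure_convexHull_extremePoints (isCompact_hypersimplex k) (convex_hypersimplex k)]
  exact closure_minimal (convexHull_min hext convex_admissibleSet) isClosed_admissibleSet

end Admissible

theorem admissible_iff_unit_interval_general
    {n k : ℕ}
    (t : Fin n → ℝ) (ht : ∑ i, t i = k) :
    (∃ Q : (Fin k → Fin n) → ℝ, IsStrategy Q ∧ ∀ i, t i = succProb Q i) ↔
      ∀ i, 0 ≤ t i ∧ t i ≤ 1 := by
  rw [← mem_admissibleSet]
  constructor
  · rintro ⟨Q, hQ, rfl⟩
    exact succProb_mem_Icc hQ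
  · exact fun h => hypersimplex_subset_admissibleSet ⟨fun i _ => h i, ht⟩

/-- **Lemma 2** (Admissibility): a vector `(t_1, …, t_n)` with `Σ t_i = k` arises as the
per-symbol success probabilities of some `k`-guess strategy if and only if
`0 ≤ t_i ≤ 1` for all `i`. -/
theorem admissible_iff_unit_interval
    {n k : ℕ} (hk1 : 1 ≤ k) (hkn : k ≤ n)
    (t : Fin n → ℝ) (ht : ∑ i, t i = k) :
    (∃ Q : (Fin k → Fin n) → ℝ, IsStrategy Q ∧ ∀ i, t i = succProb Q i) ↔
      ∀ i, 0 ≤ t i ∧ t i ≤ 1 :=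
  admissible_iff_unit_interval_general t ht
end

section
/- Let p_1 ≥ p_2 ≥ ... ≥ p_n > 0, let 1 ≤ k < n, let α ∈ (0,∞), and let 2 ≤ s ≤ k. If (k−s+2)·p_{s−1}^α / Σ_{i=s−1}^{n} p_i^α > 1, then (k−i+1)·p_i^α / Σ_{j=i}^{n} p_j^α > 1 for all i ∈ [1:s−1]. Moreover, for r = k one always has (k−k+1)·p_k^α / Σ_{i=k}^{n} p_i^α ≤ 1, so the set { r ∈ {1,...,k} : (k−r+1)·p_r^α / Σ_{i=r}^{n} p_i^α ≤ 1 } is nonempty. -/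
open Finset

/-!
Write `S r = ∑_{j=r}^n p_j^α`. Splitting off the first `m - i` terms of `S i` and bounding each
of them by `p_i^α` gives `S i ≤ (m - i) p_i^α + S m`; so whenever `S m < (k - m + 1) p_m^α`,
monotonicity of `p` yields `S i < (k - i + 1) p_i^α` for every `i ≤ m`. At `r = k` the
numerator `p_k^α` is one of the summands of `S k`.
-/

lemma sum_Icc_eq_sum_Ico_add_sum_Icc {M : Type*} [AddCommMonoid M] (w : ℕ → M) {i m n : ℕ}
    (him : i ≤ m) (hmn : m ≤ n + 1) :
    ∑ j ∈ Icc i n, w j = ∑ j ∈ Ico i m, w j + ∑ j ∈ Icc m n, w j := by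
  rw [← Ico_add_one_right_eq_Icc i n, ← Ico_add_one_right_eq_Icc m n]
  exact (sum_Ico_consecutive w him hmn).symm

lemma sum_Ico_le_of_antitoneOn {w : ℕ → ℝ} {i m n : ℕ} (hw : AntitoneOn w (Icc i n))
    (hmn : m ≤ n + 1) :
    ∑ j ∈ Ico i m, w j ≤ ((m - i : ℕ) : ℝ) * w i := by
  rw [← Nat.card_Ico, ← nsmul_eq_mul]
  refine sum_le_card_nsmul _ _ _ fun j hj ↦ ?_
  rw [mem_Ico] at hj
  exact hw (mem_Icc.2 ⟨le_rfl, by omega⟩) (mem_Icc.2 ⟨hj.1, by omega⟩) hj.1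

lemma sum_Icc_lt_mul_of_antitoneOn {w : ℕ → ℝ} {i m n : ℕ} {c : ℝ}
    (hw : AntitoneOn w (Icc i n)) (hc : 0 ≤ c) (him : i ≤ m) (hmn : m ≤ n)
    (h : ∑ j ∈ Icc m n, w j < c * w m) :
    ∑ j ∈ Icc i n, w j < ((m : ℝ) - i + c) * w i := by
  have hwm : w m ≤ w i :=
    hw (mem_Icc.2 ⟨le_rfl, him.trans hmn⟩) (mem_Icc.2 ⟨him, hmn⟩) him
  calc ∑ j ∈ Icc i n, w j
      = ∑ j ∈ Ico i m, w j + ∑ j ∈ Icc m n, w j :=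
        sum_Icc_eq_sum_Ico_add_sum_Icc w him (by omega)
    _ < ((m - i : ℕ) : ℝ) * w i + c * w m :=
        add_lt_add_of_le_of_lt (sum_Ico_le_of_antitoneOn hw (by omega)) h
    _ ≤ ((m - i : ℕ) : ℝ) * w i + c * w i := by gcongr
    _ = ((m : ℝ) - i + c) * w i := by rw [Nat.cast_sub him]; ring

theorem cases_structure_and_sstar_well_defined_general
    (n k : ℕ) (hk1 : 1 ≤ k) (hkn : k < n)
    (α : ℝ) (hα : 0 < α)
    (p : ℕ → ℝ) (hp0 : ∀ i ∈ Finset.Icc 1 n, 0 < p i)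
    (hsorted : ∀ i j, 1 ≤ i → i ≤ j → j ≤ n → p j ≤ p i)
    (s : ℕ) (hs2 : 2 ≤ s) (hsk : s ≤ k)
    (hcase : 1 < ((k : ℝ) - (s - 1 : ℕ) + 1) * p (s - 1) ^ α /
        (∑ i ∈ Finset.Icc (s - 1) n, p i ^ α)) :
    (∀ i ∈ Finset.Icc 1 (s - 1),
      1 < ((k : ℝ) - i + 1) * p i ^ α / (∑ j ∈ Finset.Icc i n, p j ^ α)) ∧
    ((k : ℝ) - k + 1) * p k ^ α / (∑ i ∈ Finset.Icc k n, p i ^ α) ≤ 1 ∧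
    {r : ℕ | r ∈ Finset.Icc 1 k ∧
      ((k : ℝ) - r + 1) * p r ^ α / (∑ i ∈ Finset.Icc r n, p i ^ α) ≤ 1}.Nonempty := by
  have hpos : ∀ i, 1 ≤ i → ∀ j ∈ Icc i n, 0 < p j ^ α := fun i hi j hj ↦
    Real.rpow_pos_of_pos (hp0 j (Icc_subset_Icc_left hi hj)) α
  have hsum_pos : ∀ i, 1 ≤ i → i ≤ n → 0 < ∑ j ∈ Icc i n, p j ^ α := fun i hi hin ↦
    sum_pos (hpos i hi) ⟨i, mem_Icc.2 ⟨le_rfl, hin⟩⟩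
  have hanti : AntitoneOn (fun j ↦ p j ^ α) (Icc 1 n) := fun i hi j hj hij ↦
    Real.rpow_le_rpow (hp0 j hj).le
      (hsorted i j (mem_Icc.1 hi).1 hij (mem_Icc.1 hj).2) hα.le
  have hlast : ((k : ℝ) - k + 1) * p k ^ α / (∑ i ∈ Icc k n, p i ^ α) ≤ 1 := by
    rw [div_le_one (hsum_pos k hk1 hkn.le), sub_self, zero_add, one_mul]
    exact single_le_sum (fun j hj ↦ (hpos k hk1 j hj).le) (mem_Icc.2 ⟨le_rfl, hkn.le⟩)
  refine ⟨fun i hi ↦ ?_, hlast, k, mem_Icc.2 ⟨hk1, le_rfl⟩, hlast⟩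
  obtain ⟨hi1, his⟩ := mem_Icc.1 hi
  rw [one_lt_div (hsum_pos (s - 1) (by omega) (by omega))] at hcase
  rw [one_lt_div (hsum_pos i hi1 (by omega))]
  have hc : (0 : ℝ) ≤ k - (s - 1 : ℕ) + 1 := by
    have : ((s - 1 : ℕ) : ℝ) ≤ k := by exact_mod_cast (by omega : s - 1 ≤ k)
    linarith
  refine (sum_Icc_lt_mul_of_antitoneOn (hanti.mono (Icc_subset_Icc_left hi1)) hc his
    (by omega) hcase).trans_eq ?_
  ring

/-- Structural properties of the cases in Theorem 1 (1-based indexing, `p i` for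
`i ∈ {1, …, n}`, sorted nonincreasingly with positive entries):
if `(k−s+2)·p_{s−1}^α / Σ_{i=s−1}^n p_i^α > 1` then
`(k−i+1)·p_i^α / Σ_{j=i}^n p_j^α > 1` for all `i ∈ [1:s−1]`; moreover for `r = k` one
always has `(k−k+1)·p_k^α / Σ_{i=k}^n p_i^α ≤ 1`, so the set defining `s*` is
nonempty. -/
theorem cases_structure_and_sstar_well_defined
    (n k : ℕ) (hk1 : 1 ≤ k) (hkn : k < n)
    (α : ℝ) (hα : 0 < α)
    (p : ℕ → ℝ) (hp0 : ∀ i ∈ Finset.Icc 1 n, 0 < p i)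
    (hp1 : ∑ i ∈ Finset.Icc 1 n, p i = 1)
    (hsorted : ∀ i j, 1 ≤ i → i ≤ j → j ≤ n → p j ≤ p i)
    (s : ℕ) (hs2 : 2 ≤ s) (hsk : s ≤ k)
    (hcase : 1 < ((k : ℝ) - (s - 1 : ℕ) + 1) * p (s - 1) ^ α /
        (∑ i ∈ Finset.Icc (s - 1) n, p i ^ α)) :
    (∀ i ∈ Finset.Icc 1 (s - 1),
      1 < ((k : ℝ) - i + 1) * p i ^ α / (∑ j ∈ Finset.Icc i n, p j ^ α)) ∧
    ((k : ℝ) - k + 1) * p k ^ α / (∑ i ∈ Finset.Icc k n, p i ^ α) ≤ 1 ∧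
    {r : ℕ | r ∈ Finset.Icc 1 k ∧
      ((k : ℝ) - r + 1) * p r ^ α / (∑ i ∈ Finset.Icc r n, p i ^ α) ≤ 1}.Nonempty :=
  cases_structure_and_sstar_well_defined_general n k hk1 hkn α hα p hp0 hsorted s hs2 hsk hcase
end

section
/- Let n ≥ k ≥ 1, let y_1 ≤ y_2 ≤ ... ≤ y_n be real numbers with Σ_{i=1}^{k} y_i ≥ 0, and let t_1,...,t_n be real numbers with 0 ≤ t_i ≤ 1 for all i and Σ_{i=1}^{n} t_i = k. Then Σ_{i=1}^{n} y_i t_i ≥ 0. -/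
/-!
Compare every `y i` with the threshold `c = y k`. Since `∑ t i = k`, the difference
`∑ y i * t i - ∑_{i ≤ k} y i` equals `∑ (y i - c) * (t i - [i ≤ k])`, and each term is
nonnegative: both factors are `≤ 0` when `i ≤ k` and `≥ 0` when `i > k`.
-/

open Finset

theorem sum_le_sum_mul_of_threshold {ι : Type*} [DecidableEq ι] {s A : Finset ι} (hA : A ⊆ s)
    {y t : ι → ℝ} {c : ℝ} (hy_le : ∀ i ∈ A, y i ≤ c) (hy_ge : ∀ i ∈ s \ A, c ≤ y i)
    (ht_le : ∀ i ∈ A, t i ≤ 1) (ht_nonneg : ∀ i ∈ s \ A, 0 ≤ t i)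
    (hts : ∑ i ∈ s, t i = #A) :
    ∑ i ∈ A, y i ≤ ∑ i ∈ s, y i * t i := by
  have hdiff : ∑ i ∈ s, y i * t i - ∑ i ∈ A, y i =
      ∑ i ∈ s, (y i - c) * (t i - if i ∈ A then 1 else 0) := by
    simp only [mul_sub, sub_mul, mul_ite, mul_one, mul_zero, sum_sub_distrib, ← mul_sum, hts,
      sum_ite_mem, inter_eq_right.mpr hA, sum_const, nsmul_eq_mul, mul_comm (#A : ℝ)]
    ring
  have hterm : ∀ i ∈ s, 0 ≤ (y i - c) * (t i - if i ∈ A then 1 else 0) := by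
    intro i hi
    by_cases hiA : i ∈ A
    · rw [if_pos hiA]
      exact mul_nonneg_of_nonpos_of_nonpos (sub_nonpos.2 (hy_le i hiA)) (sub_nonpos.2 (ht_le i hiA))
    · have hi' : i ∈ s \ A := mem_sdiff.2 ⟨hi, hiA⟩
      rw [if_neg hiA, sub_zero]
      exact mul_nonneg (sub_nonneg.2 (hy_ge i hi')) (ht_nonneg i hi')
  linarith [sum_nonneg hterm]

/-- The key inequality in the proof of the admissibility lemma (via Farkas' lemma),
with 1-based indexing: if `y_1 ≤ … ≤ y_n`, `Σ_{i=1}^k y_i ≥ 0`, `0 ≤ t_i ≤ 1` and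
`Σ_{i=1}^n t_i = k`, then `Σ_{i=1}^n y_i t_i ≥ 0`. -/
theorem farkas_key_inequality
    (n k : ℕ) (hk1 : 1 ≤ k) (hkn : k ≤ n)
    (y t : ℕ → ℝ)
    (hsorted : ∀ i j, 1 ≤ i → i ≤ j → j ≤ n → y i ≤ y j)
    (hyk : 0 ≤ ∑ i ∈ Finset.Icc 1 k, y i)
    (ht : ∀ i ∈ Finset.Icc 1 n, 0 ≤ t i ∧ t i ≤ 1)
    (hts : ∑ i ∈ Finset.Icc 1 n, t i = k) :
    0 ≤ ∑ i ∈ Finset.Icc 1 n, y i * t i := by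
  have hsub : Icc 1 k ⊆ Icc 1 n := Icc_subset_Icc_right hkn
  refine hyk.trans (sum_le_sum_mul_of_threshold (c := y k) hsub ?_ ?_ ?_ ?_ ?_)
  · intro i hi
    rw [mem_Icc] at hi
    exact hsorted i k hi.1 hi.2 hkn
  · intro i hi
    simp only [mem_sdiff, mem_Icc] at hi
    exact hsorted k i hk1 (by omega) hi.1.2
  · exact fun i hi => (ht i (hsub hi)).2
  · exact fun i hi => (ht i (mem_sdiff.1 hi).1).1
  · rw [hts, Nat.card_Icc, Nat.add_sub_cancel]
end
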